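/- Define F_t(x) = ∫_0^π (2πt)^{-1/2} exp(-(x-y)²/(2t)) sin(y) dy for t > 0 and x ∈ ℝ. Then there exists t_0 > 0 such that for every t ∈ (0, t_0), F_t''(0) > 0; in particular, for every such t the function F_t is not concave on the interval (0, π). -/

import Mathlib

open MeasureTheory Real Set Metric intervalIntegral

/-- `F_t(x) = ∫_0^π (2πt)^{-1/2} exp(-(x-y)²/(2t)) sin(y) dy`. -/
noncomputable def gaussSin (t x : ℝ) : ℝ :=
  ∫ y in Set.Icc (0 : ℝ) Real.pi,
    (Real.sqrt (2 * Real.pi * t))⁻¹ * Real.exp (-(x - y) ^ 2 / (2 * t)) * Real.sin y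

namespace GaussSinAux

noncomputable def c (t : ℝ) : ℝ := (Real.sqrt (2 * Real.pi * t))⁻¹

noncomputable def g (t x y : ℝ) : ℝ :=
  c t * Real.exp (-(x - y) ^ 2 / (2 * t)) * Real.sin y

noncomputable def g1 (t x y : ℝ) : ℝ :=
  c t * (-(x - y) / t * Real.exp (-(x - y) ^ 2 / (2 * t))) * Real.sin y

noncomputable def g2 (t x y : ℝ) : ℝ :=
  c t * (((x - y) ^ 2 / t ^ 2 - 1 / t) * Real.exp (-(x - y) ^ 2 / (2 * t))) * Real.sin y

noncomputable def F1 (t x : ℝ) : ℝ := ∫ y in (0:ℝ)..π, g1 t x y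
noncomputable def F2 (t x : ℝ) : ℝ := ∫ y in (0:ℝ)..π, g2 t x y

lemma c_pos {t : ℝ} (ht : 0 < t) : 0 < c t := by
  have : 0 < Real.sqrt (2 * Real.pi * t) :=
    Real.sqrt_pos.2 (by positivity)
  exact inv_pos.2 this

lemma gaussSin_eq (t x : ℝ) : gaussSin t x = ∫ y in (0:ℝ)..π, g t x y := by
  rw [gaussSin, intervalIntegral.integral_of_le Real.pi_pos.le,
    ← MeasureTheory.integral_Icc_eq_integral_Ioc]
  rfl

lemma cont_g (t x : ℝ) : Continuous fun y => g t x y := by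
  unfold g; fun_prop

lemma cont_g1 (t x : ℝ) : Continuous fun y => g1 t x y := by
  unfold g1; fun_prop

lemma cont_g2 (t x : ℝ) : Continuous fun y => g2 t x y := by
  unfold g2; fun_prop

lemma hasDerivAt_g {t : ℝ} (ht : 0 < t) (y x : ℝ) :
    HasDerivAt (fun x => g t x y) (g1 t x y) x := by
  have h1 : HasDerivAt (fun x : ℝ => -(x - y) ^ 2 / (2 * t))
      (-(x - y) / t) x := by
    have : HasDerivAt (fun x : ℝ => x - y) 1 x := (hasDerivAt_id x).sub_const y
    have h2 := ((this.pow 2).neg).div_const (2 * t)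
    refine h2.congr_deriv ?_
    field_simp
    ring
  have h3 : HasDerivAt (fun x : ℝ => Real.exp (-(x - y) ^ 2 / (2 * t)))
      (Real.exp (-(x - y) ^ 2 / (2 * t)) * (-(x - y) / t)) x := h1.exp
  have h4 := (h3.const_mul (c t)).mul_const (Real.sin y)
  refine h4.congr_deriv ?_
  unfold g1
  ring

lemma hasDerivAt_g1 {t : ℝ} (ht : 0 < t) (y x : ℝ) :
    HasDerivAt (fun x => g1 t x y) (g2 t x y) x := by
  have h1 : HasDerivAt (fun x : ℝ => -(x - y) ^ 2 / (2 * t))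
      (-(x - y) / t) x := by
    have : HasDerivAt (fun x : ℝ => x - y) 1 x := (hasDerivAt_id x).sub_const y
    have h2 := ((this.pow 2).neg).div_const (2 * t)
    refine h2.congr_deriv ?_
    field_simp
    ring
  have h3 : HasDerivAt (fun x : ℝ => Real.exp (-(x - y) ^ 2 / (2 * t)))
      (Real.exp (-(x - y) ^ 2 / (2 * t)) * (-(x - y) / t)) x := h1.exp
  have h5 : HasDerivAt (fun x : ℝ => -(x - y) / t) (-1 / t) x := by
    have : HasDerivAt (fun x : ℝ => -(x - y)) (-1) x :=
      ((hasDerivAt_id x).sub_const y).neg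
    exact this.div_const t
  have h6 := ((h5.mul h3).const_mul (c t)).mul_const (Real.sin y)
  refine h6.congr_deriv ?_
  unfold g2
  have ht' : (t : ℝ) ≠ 0 := ne_of_gt ht
  field_simp
  ring

lemma exp_le_one' {t x' y : ℝ} (ht : 0 < t) :
    Real.exp (-(x' - y) ^ 2 / (2 * t)) ≤ 1 := by
  rw [Real.exp_le_one_iff, neg_div]
  exact neg_nonpos.2 (by positivity)

lemma abs_sub_le' {x x' y : ℝ} (hx : x' ∈ ball x 1) : |x' - y| ≤ |x| + 1 + |y| := by
  have h2 : |x' - x| < 1 := mem_ball_iff_norm.1 hx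
  have hx' : |x'| ≤ |x| + 1 := by
    calc |x'| = |x + (x' - x)| := by ring_nf
    _ ≤ |x| + |x' - x| := abs_add_le _ _
    _ ≤ |x| + 1 := by linarith
  calc |x' - y| ≤ |x'| + |y| := abs_sub _ _
  _ ≤ |x| + 1 + |y| := by linarith

lemma bound_g1 {t : ℝ} (ht : 0 < t) {x x' y : ℝ} (hx : x' ∈ ball x 1) :
    ‖g1 t x' y‖ ≤ c t * ((|x| + 1 + |y|) / t) := by
  have hc := (c_pos ht).le
  have hexp := exp_le_one' (x' := x') (y := y) ht
  have hexp0 : (0:ℝ) ≤ Real.exp (-(x' - y) ^ 2 / (2 * t)) := (Real.exp_pos _).le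
  have hxy := abs_sub_le' (y := y) hx
  have hsin : |Real.sin y| ≤ 1 := Real.abs_sin_le_one y
  rw [g1, Real.norm_eq_abs, abs_mul, abs_mul, abs_mul, abs_div, abs_neg,
    abs_of_pos ht, abs_of_nonneg hc, abs_of_nonneg hexp0]
  calc c t * (|x' - y| / t * Real.exp (-(x' - y) ^ 2 / (2 * t))) * |Real.sin y|
      ≤ c t * ((|x| + 1 + |y|) / t * 1) * 1 := by gcongr <;> positivity
  _ = c t * ((|x| + 1 + |y|) / t) := by ring

lemma bound_g2 {t : ℝ} (ht : 0 < t) {x x' y : ℝ} (hx : x' ∈ ball x 1) :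
    ‖g2 t x' y‖ ≤ c t * ((|x| + 1 + |y|) ^ 2 / t ^ 2 + 1 / t) := by
  have hc := (c_pos ht).le
  have hexp := exp_le_one' (x' := x') (y := y) ht
  have hexp0 : (0:ℝ) ≤ Real.exp (-(x' - y) ^ 2 / (2 * t)) := (Real.exp_pos _).le
  have hxy := abs_sub_le' (y := y) hx
  have hsin : |Real.sin y| ≤ 1 := Real.abs_sin_le_one y
  have hmid : |(x' - y) ^ 2 / t ^ 2 - 1 / t| ≤ (|x| + 1 + |y|) ^ 2 / t ^ 2 + 1 / t := by
    have h1 : (x' - y) ^ 2 ≤ (|x| + 1 + |y|) ^ 2 := by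
      rw [← sq_abs (x' - y)]
      exact pow_le_pow_left₀ (abs_nonneg _) hxy 2
    have h2 : |(x' - y) ^ 2 / t ^ 2 - 1 / t| ≤ |(x' - y) ^ 2 / t ^ 2| + |1 / t| :=
      abs_sub _ _
    have h3 : |(x' - y) ^ 2 / t ^ 2| = (x' - y) ^ 2 / t ^ 2 := abs_of_nonneg (by positivity)
    have h4 : |1 / t| = 1 / t := abs_of_nonneg (by positivity)
    have h5 : (x' - y) ^ 2 / t ^ 2 ≤ (|x| + 1 + |y|) ^ 2 / t ^ 2 := by gcongr
    linarith [h2, h3.le, h4.le]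
  rw [g2, Real.norm_eq_abs, abs_mul, abs_mul, abs_mul, abs_of_nonneg hc,
    abs_of_nonneg hexp0]
  calc c t * (|(x' - y) ^ 2 / t ^ 2 - 1 / t| * Real.exp (-(x' - y) ^ 2 / (2 * t))) * |Real.sin y|
      ≤ c t * (((|x| + 1 + |y|) ^ 2 / t ^ 2 + 1 / t) * 1) * 1 := by gcongr <;> positivity
  _ = c t * ((|x| + 1 + |y|) ^ 2 / t ^ 2 + 1 / t) := by ring


lemma hasDerivAt_F {t : ℝ} (ht : 0 < t) (x : ℝ) :
    HasDerivAt (fun x => ∫ y in (0:ℝ)..π, g t x y) (F1 t x) x := by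
  have key := intervalIntegral.hasDerivAt_integral_of_dominated_loc_of_deriv_le
    (F := fun x y => g t x y) (F' := fun x y => g1 t x y) (x₀ := x)
    (a := (0:ℝ)) (b := π) (μ := volume)
    (bound := fun y => c t * ((|x| + 1 + |y|) / t)) (ball_mem_nhds x one_pos)
    (Filter.Eventually.of_forall fun x' => (cont_g t x').aestronglyMeasurable)
    ((cont_g t x).intervalIntegrable _ _)
    ((cont_g1 t x).aestronglyMeasurable)
    (Filter.Eventually.of_forall fun y _ x' hx' => bound_g1 ht hx')
    (by apply Continuous.intervalIntegrable; fun_prop)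
    (Filter.Eventually.of_forall fun y _ x' _ => hasDerivAt_g ht y x')
  exact key.2

lemma hasDerivAt_F1 {t : ℝ} (ht : 0 < t) (x : ℝ) :
    HasDerivAt (F1 t) (F2 t x) x := by
  have key := intervalIntegral.hasDerivAt_integral_of_dominated_loc_of_deriv_le
    (F := fun x y => g1 t x y) (F' := fun x y => g2 t x y) (x₀ := x)
    (a := (0:ℝ)) (b := π) (μ := volume)
    (bound := fun y => c t * ((|x| + 1 + |y|) ^ 2 / t ^ 2 + 1 / t)) (ball_mem_nhds x one_pos)
    (Filter.Eventually.of_forall fun x' => (cont_g1 t x').aestronglyMeasurable)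
    ((cont_g1 t x).intervalIntegrable _ _)
    ((cont_g2 t x).aestronglyMeasurable)
    (Filter.Eventually.of_forall fun y _ x' hx' => bound_g2 ht hx')
    (by apply Continuous.intervalIntegrable; fun_prop)
    (Filter.Eventually.of_forall fun y _ x' _ => hasDerivAt_g1 ht y x')
  exact key.2

lemma deriv_gaussSin {t : ℝ} (ht : 0 < t) : deriv (gaussSin t) = F1 t := by
  funext x
  have : gaussSin t = fun x => ∫ y in (0:ℝ)..π, g t x y := funext fun x => gaussSin_eq t x
  rw [this]
  exact (hasDerivAt_F ht x).deriv

lemma deriv_F1 {t : ℝ} (ht : 0 < t) : deriv (F1 t) = F2 t :=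
  funext fun x => (hasDerivAt_F1 ht x).deriv

lemma continuousAt_F2 {t : ℝ} (ht : 0 < t) (x : ℝ) : ContinuousAt (F2 t) x := by
  apply continuousAt_of_dominated_interval
    (bound := fun y => c t * ((|x| + 1 + |y|) ^ 2 / t ^ 2 + 1 / t))
  · exact Filter.Eventually.of_forall fun x' => (cont_g2 t x').aestronglyMeasurable
  · filter_upwards [Metric.ball_mem_nhds x one_pos] with x' hx'
    exact Filter.Eventually.of_forall fun y _ => bound_g2 ht hx'
  · apply Continuous.intervalIntegrable; fun_prop
  · refine Filter.Eventually.of_forall fun y _ => ?_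
    apply Continuous.continuousAt
    unfold g2; fun_prop


variable {t : ℝ}

lemma hasDerivAt_inner (ht : 0 < t) (y : ℝ) :
    HasDerivAt (fun y : ℝ => Real.exp (-y ^ 2 / (2 * t)))
      (Real.exp (-y ^ 2 / (2 * t)) * (-y / t)) y := by
  have h1 : HasDerivAt (fun y : ℝ => -y ^ 2 / (2 * t)) (-y / t) y := by
    have h2 := (((hasDerivAt_id y).pow 2).neg).div_const (2 * t)
    refine h2.congr_deriv ?_
    simp only [id]
    field_simp
    ring
  exact h1.exp

-- L = ∫ y e^{-y²/2t} = t - t E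
lemma L_eq (ht : 0 < t) :
    ∫ y in (0:ℝ)..π, y * Real.exp (-y ^ 2 / (2 * t))
      = t - t * Real.exp (-π ^ 2 / (2 * t)) := by
  have H : ∀ y ∈ uIcc (0:ℝ) π, HasDerivAt (fun y : ℝ => -t * Real.exp (-y ^ 2 / (2 * t)))
      (y * Real.exp (-y ^ 2 / (2 * t))) y := by
    intro y _
    have := (hasDerivAt_inner ht y).const_mul (-t)
    refine this.congr_deriv ?_
    field_simp
  rw [intervalIntegral.integral_eq_sub_of_hasDerivAt H (by apply Continuous.intervalIntegrable; fun_prop)]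
  simp [Real.exp_zero]
  ring

lemma I_le_L (ht : 0 < t) :
    ∫ y in (0:ℝ)..π, Real.exp (-y ^ 2 / (2 * t)) * Real.sin y
      ≤ ∫ y in (0:ℝ)..π, y * Real.exp (-y ^ 2 / (2 * t)) := by
  apply intervalIntegral.integral_mono_on Real.pi_pos.le
    (by apply Continuous.intervalIntegrable; fun_prop)
    (by apply Continuous.intervalIntegrable; fun_prop)
  intro y hy
  have h1 : Real.sin y ≤ y := Real.sin_le hy.1
  have h2 : (0:ℝ) < Real.exp (-y ^ 2 / (2 * t)) := Real.exp_pos _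
  nlinarith

-- K + t I = t E + t
lemma K_identity (ht : 0 < t) :
    (∫ y in (0:ℝ)..π, y * Real.exp (-y ^ 2 / (2 * t)) * Real.cos y)
      + t * ∫ y in (0:ℝ)..π, Real.exp (-y ^ 2 / (2 * t)) * Real.sin y
      = t * Real.exp (-π ^ 2 / (2 * t)) + t := by
  have H : ∀ y ∈ uIcc (0:ℝ) π,
      HasDerivAt (fun y : ℝ => -t * Real.exp (-y ^ 2 / (2 * t)) * Real.cos y)
        (y * Real.exp (-y ^ 2 / (2 * t)) * Real.cos y
          + t * (Real.exp (-y ^ 2 / (2 * t)) * Real.sin y)) y := by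
    intro y _
    have h1 := (hasDerivAt_inner ht y).const_mul (-t)
    have h2 := h1.mul (Real.hasDerivAt_cos y)
    refine h2.congr_deriv ?_
    field_simp
  have key := intervalIntegral.integral_eq_sub_of_hasDerivAt H
    (by apply Continuous.intervalIntegrable; fun_prop)
  rw [intervalIntegral.integral_add (by apply Continuous.intervalIntegrable; fun_prop)
    (by apply Continuous.intervalIntegrable; fun_prop),
    intervalIntegral.integral_const_mul] at key
  rw [key]
  simp [Real.exp_zero, Real.cos_pi]

-- J - t K = 0
lemma J_identity (ht : 0 < t) :
    (∫ y in (0:ℝ)..π, (y ^ 2 - t) * Real.exp (-y ^ 2 / (2 * t)) * Real.sin y)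
      - t * ∫ y in (0:ℝ)..π, y * Real.exp (-y ^ 2 / (2 * t)) * Real.cos y = 0 := by
  have H : ∀ y ∈ uIcc (0:ℝ) π,
      HasDerivAt (fun y : ℝ => -t * y * Real.exp (-y ^ 2 / (2 * t)) * Real.sin y)
        ((y ^ 2 - t) * Real.exp (-y ^ 2 / (2 * t)) * Real.sin y
          - t * (y * Real.exp (-y ^ 2 / (2 * t)) * Real.cos y)) y := by
    intro y _
    have h0 : HasDerivAt (fun y : ℝ => -t * y) (-t) y := by
      simpa using (hasDerivAt_id y).const_mul (-t)
    have h1 := h0.mul (hasDerivAt_inner ht y)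
    have h2 := h1.mul (Real.hasDerivAt_sin y)
    refine h2.congr_deriv ?_
    simp only [Pi.mul_apply]
    field_simp
    ring
  have key := intervalIntegral.integral_eq_sub_of_hasDerivAt H
    (by apply Continuous.intervalIntegrable; fun_prop)
  rw [intervalIntegral.integral_sub (by apply Continuous.intervalIntegrable; fun_prop)
    (by apply Continuous.intervalIntegrable; fun_prop),
    intervalIntegral.integral_const_mul] at key
  rw [key]
  simp [Real.sin_pi]

lemma F2_zero_pos (ht : 0 < t) (ht1 : t < 1) : 0 < F2 t 0 := by
  have ht' : t ≠ 0 := ne_of_gt ht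
  set I := ∫ y in (0:ℝ)..π, Real.exp (-y ^ 2 / (2 * t)) * Real.sin y with hI
  set K := ∫ y in (0:ℝ)..π, y * Real.exp (-y ^ 2 / (2 * t)) * Real.cos y with hK
  set J := ∫ y in (0:ℝ)..π, (y ^ 2 - t) * Real.exp (-y ^ 2 / (2 * t)) * Real.sin y with hJ
  set E := Real.exp (-π ^ 2 / (2 * t)) with hE
  have hEpos : 0 < E := Real.exp_pos _
  have hIL : I ≤ t - t * E := (I_le_L ht).trans (L_eq ht).le
  have hKI : K + t * I = t * E + t := K_identity ht
  have hJK : J - t * K = 0 := J_identity ht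
  have hJpos : 0 < J := by
    have h1 : t * I ≤ t * (t - t * E) := mul_le_mul_of_nonneg_left hIL ht.le
    have h3 : 0 < t * E + t - t * (t - t * E) := by nlinarith [mul_pos ht hEpos, mul_pos ht (show (0:ℝ) < 1 - t by linarith)]
    have hJval : J = t * (t * E + t - t * I) := by
      have hKval : K = t * E + t - t * I := by linarith
      rw [← hKval]; linarith
    rw [hJval]
    exact mul_pos ht (by linarith)
  have hF2 : F2 t 0 = (c t / t ^ 2) * J := by
    rw [F2, hJ, ← intervalIntegral.integral_const_mul]
    apply intervalIntegral.integral_congr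
    intro y _
    unfold g2
    have h0 : (0 - y : ℝ) ^ 2 = y ^ 2 := by ring
    rw [h0]
    field_simp
  rw [hF2]
  have := c_pos ht
  positivity

end GaussSinAux

/-- There is `t₀ > 0` such that for every `t ∈ (0, t₀)` the second derivative of `F_t` at `0`
is positive; in particular `F_t` is not concave on `(0, π)`. -/
theorem gaussSin_not_concave :
    ∃ t₀ > (0 : ℝ), ∀ t ∈ Set.Ioo (0 : ℝ) t₀,
      0 < deriv (deriv (gaussSin t)) 0 ∧
      ¬ ConcaveOn ℝ (Set.Ioo (0 : ℝ) Real.pi) (gaussSin t) := by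
  refine ⟨1, one_pos, fun t ht => ?_⟩
  obtain ⟨ht0, ht1⟩ := ht
  have hd2 : deriv (deriv (gaussSin t)) = GaussSinAux.F2 t := by
    rw [GaussSinAux.deriv_gaussSin ht0, GaussSinAux.deriv_F1 ht0]
  have hpos0 : 0 < GaussSinAux.F2 t 0 := GaussSinAux.F2_zero_pos ht0 ht1
  refine ⟨by rw [hd2]; exact hpos0, ?_⟩
  intro hcon
  have hcont := GaussSinAux.continuousAt_F2 ht0 0
  have hev : GaussSinAux.F2 t ⁻¹' Set.Ioi 0 ∈ nhds (0:ℝ) := hcont (Ioi_mem_nhds hpos0)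
  obtain ⟨δ, hδpos, hball⟩ := Metric.mem_nhds_iff.1 hev
  set ε := min δ π with hε
  have hεpos : 0 < ε := lt_min hδpos Real.pi_pos
  have hdiff : ∀ x : ℝ, HasDerivAt (gaussSin t) (GaussSinAux.F1 t x) x := by
    intro x
    have heq : gaussSin t = fun x => ∫ y in (0:ℝ)..π, GaussSinAux.g t x y :=
      funext fun x => GaussSinAux.gaussSin_eq t x
    rw [heq]
    exact GaussSinAux.hasDerivAt_F ht0 x
  have hcontOn : ContinuousOn (gaussSin t) (Ioo 0 ε) :=
    fun x _ => (hdiff x).continuousAt.continuousWithinAt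
  have hsc : StrictConvexOn ℝ (Ioo 0 ε) (gaussSin t) := by
    apply strictConvexOn_of_deriv2_pos (convex_Ioo _ _) hcontOn
    intro x hx
    rw [interior_Ioo] at hx
    have hiter : deriv^[2] (gaussSin t) = deriv (deriv (gaussSin t)) := rfl
    rw [hiter, hd2]
    have hxball : x ∈ ball (0:ℝ) δ := by
      rw [mem_ball, Real.dist_eq, sub_zero, abs_of_pos hx.1]
      exact lt_of_lt_of_le hx.2 (min_le_left _ _)
    exact hball hxball
  have hcon' : ConcaveOn ℝ (Ioo 0 ε) (gaussSin t) :=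
    hcon.subset (Set.Ioo_subset_Ioo le_rfl (min_le_right _ _)) (convex_Ioo _ _)
  have ha : ε / 4 ∈ Ioo (0:ℝ) ε := ⟨by linarith, by linarith⟩
  have hb : ε / 2 ∈ Ioo (0:ℝ) ε := ⟨by linarith, by linarith⟩
  have hab : ε / 4 ≠ ε / 2 := by intro h; nlinarith
  have h1 := hsc.2 ha hb hab (by norm_num : (0:ℝ) < 1/2) (by norm_num : (0:ℝ) < 1/2)
    (by norm_num)
  have h2 := hcon'.2 ha hb (by norm_num : (0:ℝ) ≤ 1/2) (by norm_num : (0:ℝ) ≤ 1/2)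
    (by norm_num)
  simp only [smul_eq_mul] at h1 h2
  linarith
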